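/- arXiv:1012.4777 — 4 statements merged into one kernel-verified Lean document; each statement's English description precedes it below -/
import Mathlib

section
/- Let (V, E, g, n) be a stable graph of type (G, N) with K = |V| vertices, and let p be the number of vertices v with g_v = 0. Then 2p ≤ 2(G - \sum_v g_v) + K - 2 + N. (Intuition: the stability condition at each genus-0 vertex requires at least 3 half-edges, one of which can come from the K-1 edges needed to connect the graph; the remaining half-edges are bounded by the total number of available half-edges plus marked points.) -/
/-!
Stability gives every genus-zero vertex at least three half-edges or marked points, and as soon as
there is a genus-zero vertex `w`, connectivity gives every other vertex at least one half-edge.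
Hence `3p + (K - p) ≤ ∑ᵥ (deg v + nᵥ) = 2|E| + N`, and the genus condition
`|E| = G - ∑ᵥ gᵥ + K - 1` turns this into the claim.
-/

open Finset

/-- Number of edges of a multigraph on `Fin K` with multiplicity matrix `a`
(loops counted once). -/
def edgeCount {K : ℕ} (a : Fin K → Fin K → ℕ) : ℕ :=
  (∑ v, a v v) + ∑ i, ∑ j, if i < j then a i j else 0

/-- Degree of a vertex: loops count twice. -/
def degree {K : ℕ} (a : Fin K → Fin K → ℕ) (v : Fin K) : ℕ :=
  2 * a v v + ∑ w ∈ Finset.univ.filter (fun w => w ≠ v), a v w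

/-- A stable graph of type `(G, N)` on `K` vertices: a connected colored
multigraph with genus condition, marked-point condition, and stability. -/
structure StableGraph (G N K : ℕ) where
  a : Fin K → Fin K → ℕ
  g : Fin K → ℕ
  n : Fin K → ℕ
  symm : ∀ i j, a i j = a j i
  conn : (SimpleGraph.fromRel (fun i j : Fin K => 0 < a i j)).Connected
  genus : (∑ v, g v) + edgeCount a = G + (K - 1)
  marks : (∑ v, n v) = N
  stable : ∀ v, g v = 0 → 3 ≤ degree a v + n v

lemma degree_eq_add_sum {K : ℕ} (a : Fin K → Fin K → ℕ) (v : Fin K) :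
    degree a v = a v v + ∑ w, a v w := by
  rw [degree, filter_ne', ← add_sum_erase _ _ (mem_univ v)]
  ring

lemma two_mul_edgeCount {K : ℕ} {a : Fin K → Fin K → ℕ} (hsymm : ∀ i j, a i j = a j i) :
    2 * edgeCount a = ∑ v, a v v + ∑ i, ∑ j, a i j := by
  have hlower : ∑ i, ∑ j, (if j < i then a i j else 0) = ∑ i, ∑ j, (if i < j then a i j else 0) := by
    rw [sum_comm]
    simp only [hsymm]
  have hsplit : ∀ i j, a i j = (if i < j then a i j else 0) + (if j < i then a i j else 0) +
      (if i = j then a i j else 0) := by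
    intro i j
    rcases lt_trichotomy i j with h | rfl | h
    · simp [h, h.ne, not_lt.mpr h.le]
    · simp
    · simp [h, h.ne', not_lt.mpr h.le]
  rw [sum_congr rfl fun i _ => sum_congr rfl fun j _ => hsplit i j]
  simp only [edgeCount, sum_add_distrib, hlower, sum_ite_eq, mem_univ, if_true]
  ring

theorem sum_degree_eq_two_mul_edgeCount {K : ℕ} {a : Fin K → Fin K → ℕ}
    (hsymm : ∀ i j, a i j = a j i) : ∑ v, degree a v = 2 * edgeCount a := by
  simp only [degree_eq_add_sum, sum_add_distrib, two_mul_edgeCount hsymm]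

lemma one_le_degree_of_ne {K : ℕ} {a : Fin K → Fin K → ℕ} (hsymm : ∀ i j, a i j = a j i)
    (hconn : (SimpleGraph.fromRel (fun i j : Fin K => 0 < a i j)).Connected)
    {v w : Fin K} (hvw : v ≠ w) : 1 ≤ degree a v := by
  have : Nontrivial (Fin K) := nontrivial_of_ne v w hvw
  obtain ⟨u, -, hpos⟩ := hconn.preconnected.exists_adj_of_nontrivial v
  simp only [hsymm u v, or_self] at hpos
  rw [degree_eq_add_sum]
  have hle := single_le_sum (fun w _ => Nat.zero_le (a v w)) (mem_univ u)
  omega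

namespace StableGraph

variable {G N K : ℕ} (X : StableGraph G N K)

lemma sum_degree_add_marks : ∑ v, (degree X.a v + X.n v) = 2 * edgeCount X.a + N := by
  rw [sum_add_distrib, sum_degree_eq_two_mul_edgeCount X.symm, X.marks]

lemma two_mul_card_genus_zero_add_le {w : Fin K} (hw : X.g w = 0) :
    2 * #{v | X.g v = 0} + K ≤ 2 * edgeCount X.a + N := by
  have hbound : ∀ v, (if X.g v = 0 then 3 else 1) ≤ degree X.a v + X.n v := by
    intro v
    split_ifs with hv
    · exact X.stable v hv
    · have := one_le_degree_of_ne X.symm X.conn (v := v) (w := w) (by rintro rfl; exact hv hw)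
      omega
  have hcard := card_filter_add_card_filter_not (s := univ) (fun v => X.g v = 0)
  have hsum := sum_le_sum fun v (_ : v ∈ univ) => hbound v
  rw [sum_ite, sum_const, sum_const, X.sum_degree_add_marks, smul_eq_mul, smul_eq_mul] at hsum
  rw [card_univ, Fintype.card_fin] at hcard
  omega

end StableGraph

/-- If `p` is the number of genus-zero vertices of a stable graph of type
`(G, N)` on `K` vertices, then `2p ≤ 2(G - ∑ g_v) + K - 2 + N`. -/
theorem stmt3 (G N K : ℕ) (X : StableGraph G N K)
    (p : ℕ) (hp : p = (Finset.univ.filter (fun v => X.g v = 0)).card) :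
    2 * p ≤ 2 * (G - ∑ v, X.g v) + K + N - 2 := by
  have hK : 1 ≤ K := Fin.pos_iff_nonempty.mpr X.conn.nonempty
  have hgenus := X.genus
  rcases Nat.eq_zero_or_pos p with hp0 | hp0
  · omega
  obtain ⟨w, hw⟩ : ∃ w, X.g w = 0 := by
    simpa [hp, card_pos, Finset.Nonempty] using hp0
  have hbound := X.two_mul_card_genus_zero_add_le hw
  omega
end

section
/- If 2G - 2 + N > 0 and (V, E, g, n) is a stable graph of type (G, N), then the number of vertices |V| is at most 2G - 2 + N. In particular, for fixed G and N there are only finitely many isomorphism classes of stable graphs of type (G, N). -/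
/-!
Give each vertex `v` the weight `2 g_v - 2 + deg v + n_v`. Stability makes it at least `1`: for
`g_v = 0` this is the stability condition, and for `g_v ≥ 1` connectedness forces `deg v ≥ 1` as
soon as there are two vertices. By the handshake lemma and the genus formula the weights add up to
`2G - 2 + N`, which bounds `|V|`. Once `|V|` is bounded, the genus formula bounds all edge
multiplicities and vertex genera, so there are only finitely many stable graphs of type `(G, N)`.
-/

open Finset

lemma sum_ne_eq_sum_gt_add_sum_lt {ι M : Type*} [Fintype ι] [LinearOrder ι] [AddCommMonoid M]
    (f : ι → M) (v : ι) :
    ∑ w ∈ univ.filter (fun w => w ≠ v), f w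
      = (∑ w, if v < w then f w else 0) + ∑ w, if w < v then f w else 0 := by
  rw [sum_filter, ← sum_add_distrib]
  refine sum_congr rfl fun w _ => ?_
  rcases lt_trichotomy v w with hvw | rfl | hwv
  · simp [hvw.ne', hvw, hvw.not_gt]
  · simp
  · simp [hwv.ne, hwv, hwv.not_gt]

lemma sum_degree {K : ℕ} (a : Fin K → Fin K → ℕ) (hs : ∀ i j, a i j = a j i) :
    ∑ v, degree a v = 2 * edgeCount a := by
  have hsum_lt : ∑ v, ∑ w, (if w < v then a v w else 0)
      = ∑ i, ∑ j, if i < j then a i j else 0 := by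
    rw [sum_comm]
    simp only [hs]
  simp only [degree, edgeCount, sum_add_distrib, sum_ne_eq_sum_gt_add_sum_lt, hsum_lt, ← mul_sum]
  ring

lemma le_edgeCount {K : ℕ} (a : Fin K → Fin K → ℕ) (hs : ∀ i j, a i j = a j i)
    (i j : Fin K) : a i j ≤ edgeCount a := by
  have h_lt : ∀ p q : Fin K, p < q → a p q ≤ edgeCount a := fun p q hpq =>
    calc a p q = if p < q then a p q else 0 := (if_pos hpq).symm
      _ ≤ ∑ j, if p < j then a p j else 0 :=
        single_le_sum (f := fun j => if p < j then a p j else 0) (by simp) (mem_univ q)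
      _ ≤ ∑ i, ∑ j, if i < j then a i j else 0 :=
        single_le_sum (f := fun i => ∑ j, if i < j then a i j else 0) (by simp) (mem_univ p)
      _ ≤ edgeCount a := Nat.le_add_left _ _
  rcases lt_trichotomy i j with hij | rfl | hji
  · exact h_lt i j hij
  · exact (single_le_sum (f := fun v => a v v) (by simp) (mem_univ i)).trans (Nat.le_add_right _ _)
  · rw [hs]
    exact h_lt j i hji

namespace StableGraph

variable {G N K : ℕ}

lemma one_le_card (S : StableGraph G N K) : 1 ≤ K :=
  Fin.pos_iff_nonempty.mpr S.conn.nonempty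

lemma one_le_degree (S : StableGraph G N K) (hK : 2 ≤ K) (v : Fin K) : 1 ≤ degree S.a v := by
  have : Nontrivial (Fin K) := Fin.nontrivial_iff_two_le.mpr hK
  obtain ⟨w, hne, hpos⟩ := S.conn.preconnected.exists_adj_of_nontrivial v
  have hvw : 0 < S.a v w := hpos.elim id fun h => S.symm v w ▸ h
  calc 1 ≤ S.a v w := hvw
    _ ≤ ∑ u ∈ univ.filter (fun u => u ≠ v), S.a v u :=
      single_le_sum (f := S.a v) (by simp) (by simpa using Ne.symm hne)
    _ ≤ degree S.a v := Nat.le_add_left _ _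

/-- The paper's weight `2 g_v - 2 + deg v + n_v`, shifted by `2` to avoid truncated subtraction. -/
def weight (S : StableGraph G N K) (v : Fin K) : ℕ :=
  2 * S.g v + degree S.a v + S.n v

lemma three_le_weight (S : StableGraph G N K) (hK : 2 ≤ K) (v : Fin K) : 3 ≤ S.weight v := by
  unfold weight
  rcases Nat.eq_zero_or_pos (S.g v) with hg | hg
  · have := S.stable v hg
    omega
  · have := S.one_le_degree hK v
    omega

lemma sum_weight (S : StableGraph G N K) :
    ∑ v, S.weight v = 2 * (G + (K - 1)) + N := by
  simp only [weight]
  rw [sum_add_distrib, sum_add_distrib, ← mul_sum, sum_degree S.a S.symm, S.marks, ← mul_add,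
    S.genus]

lemma card_le (S : StableGraph G N K) (h : 2 < 2 * G + N) : K ≤ 2 * G + N - 2 := by
  obtain rfl | hK : K = 1 ∨ 2 ≤ K := by
    have := S.one_le_card
    omega
  · omega
  have hsum : K • 3 ≤ ∑ v, S.weight v := by
    simpa using card_nsmul_le_sum univ _ 3 fun v _ => S.three_le_weight hK v
  rw [sum_weight, smul_eq_mul] at hsum
  omega

lemma data_injective : Function.Injective fun S : StableGraph G N K => (S.a, S.g, S.n) := by
  rintro ⟨⟩ ⟨⟩ h
  simp only [Prod.mk.injEq] at h
  obtain ⟨rfl, rfl, rfl⟩ := h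
  rfl

lemma a_le (S : StableGraph G N K) (i j : Fin K) : S.a i j ≤ G + K := by
  have := le_edgeCount S.a S.symm i j
  have := S.genus
  omega

lemma g_le (S : StableGraph G N K) (v : Fin K) : S.g v ≤ G + K := by
  have := single_le_sum (f := S.g) (by simp) (mem_univ v)
  have := S.genus
  omega

lemma n_le (S : StableGraph G N K) (v : Fin K) : S.n v ≤ N :=
  (single_le_sum (f := S.n) (fun _ _ => Nat.zero_le _) (mem_univ v)).trans_eq S.marks

instance : Finite (StableGraph G N K) := by
  refine Finite.of_injective
    (β := (Fin K → Fin K → Fin (G + K + 1)) × (Fin K → Fin (G + K + 1)) × (Fin K → Fin (N + 1)))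
    (fun S => (fun i j => ⟨S.a i j, Nat.lt_succ_of_le (S.a_le i j)⟩,
      fun v => ⟨S.g v, Nat.lt_succ_of_le (S.g_le v)⟩,
      fun v => ⟨S.n v, Nat.lt_succ_of_le (S.n_le v)⟩))
    fun S T hST => data_injective ?_
  simp only [Prod.mk.injEq, funext_iff, Fin.mk.injEq] at hST ⊢
  exact hST

end StableGraph

lemma finite_sigma_of_le {β : ℕ → Type*} [∀ k, Finite (β k)] (M : ℕ) (hM : ∀ k, β k → k ≤ M) :
    Finite ((k : ℕ) × β k) :=
  Finite.of_injective (β := (k : Fin (M + 1)) × β k)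
    (fun x => ⟨⟨x.1, Nat.lt_succ_of_le (hM _ x.2)⟩, x.2⟩)
    fun x y hxy => by
      obtain ⟨hfst, hsnd⟩ := Sigma.ext_iff.mp hxy
      exact Sigma.ext_iff.mpr ⟨congrArg Fin.val hfst, hsnd⟩

/-- If `2G - 2 + N > 0`, every stable graph of type `(G, N)` has at most
`2G - 2 + N` vertices; in particular there are only finitely many stable
graphs (hence finitely many isomorphism classes) of type `(G, N)`. -/
theorem stmt5 (G N : ℕ) (h : 2 < 2 * G + N) :
    (∀ K : ℕ, StableGraph G N K → (K : ℤ) ≤ 2 * G - 2 + N) ∧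
    Finite ((K : ℕ) × StableGraph G N K) := by
  refine ⟨fun K S => ?_, finite_sigma_of_le _ fun K S => S.card_le h⟩
  have := S.card_le h
  omega
end

section
/- Fix K ≥ 1 and a data matrix G = (g, n, l, a) with a symmetric. Say G is 'ordered' if it has no breaking position, i.e., for all j with 0 < j < K: (i) g_{j-1} ≤ g_j; (ii) if n_{j-1} > n_j then g_{j-1} < g_j; (iii) if l_{j-1} > l_j then g_{j-1} < g_j or n_{j-1} < n_j; (iv) for all i ∉ {j-1, j}, if a_{i,j-1} > a_{i,j} then g_{j-1} < g_j, or n_{j-1} < n_j, or l_{j-1} < l_j, or there exists i' < i with i' ∉ {j-1, j} and a_{i',j-1} < a_{i',j}. Then G is ordered if and only if G is ≺-minimal in the set {σ_{j-1,j} G : 0 < j < K} ∪ {G}, where ≺ is the lexicographic order on v(G) (concatenation of g, n, l and the strict upper triangle of a) and σ_{j-1,j} acts by relabeling indices. -/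
/-!
Let `p ⋖ q` be adjacent indices and `σ` their transposition. The vectors `v(σG)` and `v(G)` can
differ only where `g`, `n`, `l` are read at `p` or `q` and where the strict upper triangle of `a`
meets row or column `p` or `q`. Reading `v` in order, the entries `a_{i,p}`, `a_{i,q}` with
`i ∉ {p, q}` are reached in increasing order of `i`: first along the rows `i < p`, then along row
`p` for `i > q`. The entry `a_{p,q}` is fixed by symmetry, and row `q` can only change after row `p`
has. Hence `σG ≺ G` iff the key `(g_q, n_q, l_q, (a_{i,q})_{i ∉ {p,q}})` is lexicographically
smaller than the same key at `p`, and having no breaking position at `q` is the negation of this,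
spelled out coordinate by coordinate.
-/

open Finset

/-- A data matrix: the vectors `g`, `n`, `l` and the adjacency matrix `a`. -/
abbrev DataMatrix (K : ℕ) :=
  (Fin K → ℕ) × (Fin K → ℕ) × (Fin K → ℕ) × (Fin K → Fin K → ℕ)

/-- The vector `v(G)`: juxtaposition of `g`, `n`, `l` and the strictly upper
triangular part of `a`, read row by row. -/
def vvec {K : ℕ} (M : DataMatrix K) : List ℕ :=
  List.ofFn M.1 ++ List.ofFn M.2.1 ++ List.ofFn M.2.2.1 ++
    (List.finRange K).flatMap
      (fun i => ((List.finRange K).filter (fun j => i < j)).map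
        (fun j => M.2.2.2 i j))

/-- The order `≺`: lexicographic comparison of the vectors `v(·)`. -/
def prec {K : ℕ} (M N : DataMatrix K) : Prop :=
  List.Lex (· < ·) (vvec M) (vvec N)

/-- The action of a permutation on a data matrix. -/
def permAct {K : ℕ} (σ : Equiv.Perm (Fin K)) (M : DataMatrix K) : DataMatrix K :=
  (fun j => M.1 (σ j), fun j => M.2.1 (σ j), fun j => M.2.2.1 (σ j),
    fun i j => M.2.2.2 (σ i) (σ j))

/-- `M` is ordered: it has no breaking position. -/
def OrderedData {K : ℕ} (M : DataMatrix K) : Prop :=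
  ∀ (j : ℕ) (hj : j < K), 0 < j →
    ∀ (p q : Fin K), p = ⟨j - 1, by omega⟩ → q = ⟨j, hj⟩ →
    (M.1 p ≤ M.1 q) ∧
    (M.2.1 q < M.2.1 p → M.1 p < M.1 q) ∧
    (M.2.2.1 q < M.2.2.1 p → M.1 p < M.1 q ∨ M.2.1 p < M.2.1 q) ∧
    (∀ i : Fin K, i ≠ p → i ≠ q → M.2.2.2 i q < M.2.2.2 i p →
      M.1 p < M.1 q ∨ M.2.1 p < M.2.1 q ∨ M.2.2.1 p < M.2.2.1 q ∨
      ∃ i' : Fin K, (i' : ℕ) < (i : ℕ) ∧ i' ≠ p ∧ i' ≠ q ∧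
        M.2.2.2 i' p < M.2.2.2 i' q)

theorem CovBy.lt_or_eq_or_eq_or_gt {β : Type*} [LinearOrder β] {p q : β} (hpq : p ⋖ q)
    (x : β) : x < p ∨ x = p ∨ x = q ∨ q < x := by
  rcases lt_trichotomy x p with h | h | h
  · exact .inl h
  · exact .inr (.inl h)
  · exact .inr (.inr ((hpq.ge_of_gt h).eq_or_lt.imp Eq.symm id))

theorem Equiv.swap_apply_of_lt_of_lt {β : Type*} [Preorder β] [DecidableEq β] {p q x : β}
    (hxp : x < p) (hpq : p < q) : swap p q x = x :=
  swap_apply_of_ne_of_ne hxp.ne (hxp.trans hpq).ne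

theorem Equiv.swap_apply_of_gt_of_gt {β : Type*} [Preorder β] [DecidableEq β] {p q x : β}
    (hpq : p < q) (hqx : q < x) : swap p q x = x :=
  swap_apply_of_ne_of_ne (hpq.trans hqx).ne' hqx.ne'

namespace List

variable {α β : Type*} {r : α → α → Prop}

theorem lex_append_iff_of_length_eq {l₁ l₂ m₁ m₂ : List α}
    (h : l₁.length = l₂.length) :
    Lex r (l₁ ++ m₁) (l₂ ++ m₂) ↔ Lex r l₁ l₂ ∨ l₁ = l₂ ∧ Lex r m₁ m₂ := by
  induction l₁ generalizing l₂ with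
  | nil => cases l₂ <;> simp_all
  | cons a l₁ ih =>
    cases l₂ with
    | nil => simp at h
    | cons b l₂ =>
      simp only [cons_append, cons_lex_cons_iff, ih (by simpa using h), cons.injEq]
      tauto

theorem lex_flatMap_iff [Preorder β] {l : List β} (hl : l.Pairwise (· < ·))
    {F G : β → List α} (hFG : ∀ x ∈ l, (F x).length = (G x).length) :
    Lex r (l.flatMap F) (l.flatMap G) ↔
      ∃ x ∈ l, Lex r (F x) (G x) ∧ ∀ y ∈ l, y < x → F y = G y := by
  induction l with
  | nil => simp
  | cons a l ih =>
    obtain ⟨ha, hl⟩ := pairwise_cons.1 hl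
    rw [flatMap_cons, flatMap_cons, lex_append_iff_of_length_eq (hFG a mem_cons_self),
      ih hl fun x hx => hFG x (mem_cons_of_mem a hx)]
    simp only [mem_cons, exists_eq_or_imp, forall_eq_or_imp, lt_irrefl, false_imp_iff,
      true_and]
    constructor
    · rintro (h | ⟨he, x, hx, hlex, hbelow⟩)
      · exact .inl ⟨h, fun y hy hya => absurd (ha y hy) (not_lt_of_gt hya)⟩
      · exact .inr ⟨x, hx, hlex, fun _ => he, hbelow⟩
    · rintro (⟨h, -⟩ | ⟨x, hx, hlex, he, hbelow⟩)
      · exact .inl h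
      · exact .inr ⟨he (ha x hx), x, hx, hlex, hbelow⟩

theorem lex_map_iff [Preorder β] {l : List β} (hl : l.Pairwise (· < ·))
    {f g : β → α} :
    Lex r (l.map f) (l.map g) ↔ ∃ x ∈ l, r (f x) (g x) ∧ ∀ y ∈ l, y < x → f y = g y := by
  simpa [map_eq_flatMap] using
    lex_flatMap_iff hl (r := r) (F := fun x => [f x]) (G := fun x => [g x]) (by simp)

theorem not_lex_map_iff [Preorder β] [LinearOrder α] {l : List β} (hl : l.Pairwise (· < ·))
    {f g : β → α} :
    ¬ Lex (· < ·) (l.map f) (l.map g) ↔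
      ∀ x ∈ l, f x < g x → ∃ y ∈ l, y < x ∧ g y < f y := by
  induction l with
  | nil => simp
  | cons a l ih =>
    obtain ⟨ha, hl⟩ := pairwise_cons.1 hl
    have hfirst : (f a < g a → ∃ y ∈ l, y < a ∧ g y < f y) ↔ ¬ f a < g a :=
      ⟨fun h h' => let ⟨y, hy, hya, _⟩ := h h'; (ha y hy).not_gt hya,
        fun h h' => absurd h' h⟩
    rw [map_cons, map_cons, cons_lex_cons_iff, forall_mem_cons]
    simp only [mem_cons, exists_eq_or_imp, lt_irrefl, false_and, false_or, hfirst]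
    rcases lt_trichotomy (f a) (g a) with h | h | h
    · simp [h]
    · simpa [h] using ih hl
    · simpa [h.not_gt, h.ne'] using fun x hx _ => .inl ⟨ha x hx, h⟩

theorem map_swap_eq_map_iff [DecidableEq β] {l : List β} {p q : β} (hp : p ∈ l)
    (f : β → α) :
    l.map (fun x => f (Equiv.swap p q x)) = l.map f ↔ f q = f p := by
  rw [map_inj_left]
  refine ⟨fun h => by simpa using h p hp, fun h x _ => ?_⟩
  rcases eq_or_ne x p with rfl | hxp
  · simpa using h
  rcases eq_or_ne x q with rfl | hxq
  · simpa using h.symm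
  · rw [Equiv.swap_apply_of_ne_of_ne hxp hxq]

theorem lex_map_swap_iff [Preorder β] [DecidableEq β] [Preorder α] {l : List β}
    (hl : l.Pairwise (· < ·)) {p q : β} (hp : p ∈ l) (hpq : p < q) (f : β → α) :
    Lex (· < ·) (l.map (fun x => f (Equiv.swap p q x))) (l.map f) ↔ f q < f p := by
  rw [lex_map_iff hl]
  constructor
  · rintro ⟨x, -, hlt, hbelow⟩
    rcases eq_or_ne x p with rfl | hxp
    · simpa using hlt
    rcases eq_or_ne x q with rfl | hxq
    · have hpq_eq := hbelow p hp hpq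
      simp only [Equiv.swap_apply_left, Equiv.swap_apply_right] at hpq_eq hlt
      exact absurd (hpq_eq ▸ hlt) (lt_irrefl _)
    · simp [Equiv.swap_apply_of_ne_of_ne hxp hxq] at hlt
  · refine fun h => ⟨p, hp, by simpa using h, fun y _ hy => ?_⟩
    rw [Equiv.swap_apply_of_lt_of_lt hy hpq]

end List

section UpperTriangle

open List Equiv

variable {K : ℕ} {α : Type*}

def upperRow (a : Fin K → Fin K → α) (i : Fin K) : List α :=
  ((finRange K).filter (fun j => i < j)).map (fun j => a i j)

def offColumn (a : Fin K → Fin K → α) (p q k : Fin K) : List α :=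
  ((finRange K).filter (fun i => i ≠ p ∧ i ≠ q)).map (fun i => a i k)

theorem pairwise_lt_filter_finRange (P : Fin K → Bool) :
    ((finRange K).filter P).Pairwise (· < ·) :=
  (pairwise_lt_finRange K).filter P

variable {a : Fin K → Fin K → α} {p q x : Fin K}

theorem upperRow_swap_of_lt (hxp : x < p) (hpq : p < q) :
    upperRow (fun i j => a (swap p q i) (swap p q j)) x =
      ((finRange K).filter (fun j => x < j)).map (fun j => a x (swap p q j)) := by
  simp only [upperRow, swap_apply_of_lt_of_lt hxp hpq]

theorem upperRow_swap_eq_of_lt (hxp : x < p) (hpq : p < q) :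
    upperRow (fun i j => a (swap p q i) (swap p q j)) x = upperRow a x ↔ a x q = a x p := by
  rw [upperRow_swap_of_lt hxp hpq]
  exact map_swap_eq_map_iff (by simpa using hxp) _

theorem upperRow_swap_of_gt (hpq : p < q) (hqx : q < x) :
    upperRow (fun i j => a (swap p q i) (swap p q j)) x = upperRow a x := by
  refine map_congr_left fun j hj => ?_
  simp only [swap_apply_of_gt_of_gt hpq hqx,
    swap_apply_of_gt_of_gt hpq (hqx.trans (by simpa using hj))]

theorem upperRow_swap_right_eq (ha : ∀ i j, a i j = a j i) (hpq : p < q)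
    (hcol : ∀ i, q < i → a i q = a i p) :
    upperRow (fun i j => a (swap p q i) (swap p q j)) q = upperRow a q := by
  refine map_congr_left fun j hj => ?_
  have hqj : q < j := by simpa using hj
  simp only [swap_apply_right, swap_apply_of_gt_of_gt hpq hqj]
  rw [ha p, ha q, hcol j hqj]

theorem upperRow_swap_left_eq_iff (ha : ∀ i j, a i j = a j i) (hpq : p ⋖ q) :
    upperRow (fun i j => a (swap p q i) (swap p q j)) p = upperRow a p ↔
      ∀ i, q < i → a i q = a i p := by
  simp only [upperRow, map_inj_left, mem_filter, mem_finRange, decide_eq_true_eq, true_and,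
    swap_apply_left]
  refine ⟨fun h i hqi => ?_, fun h j hpj => ?_⟩
  · simpa [swap_apply_of_gt_of_gt hpq.lt hqi, ha _ i] using h i (hpq.lt.trans hqi)
  · rcases (hpq.ge_of_gt hpj).eq_or_lt with rfl | hqj
    · simpa using ha _ _
    · simpa [swap_apply_of_gt_of_gt hpq.lt hqj, ha _ j] using h j hqj

variable [Preorder α]

theorem lex_upperRow_swap_of_lt (hxp : x < p) (hpq : p < q) :
    Lex (· < ·) (upperRow (fun i j => a (swap p q i) (swap p q j)) x) (upperRow a x) ↔
      a x q < a x p := by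
  rw [upperRow_swap_of_lt hxp hpq]
  exact lex_map_swap_iff (pairwise_lt_filter_finRange _) (by simpa using hxp) hpq _

theorem lex_upperRow_swap_left_iff (ha : ∀ i j, a i j = a j i) (hpq : p ⋖ q) :
    Lex (· < ·) (upperRow (fun i j => a (swap p q i) (swap p q j)) p) (upperRow a p) ↔
      ∃ i, q < i ∧ a i q < a i p ∧ ∀ i', q < i' → i' < i → a i' q = a i' p := by
  rw [upperRow, upperRow, lex_map_iff (pairwise_lt_filter_finRange _)]
  simp only [mem_filter, mem_finRange, decide_eq_true_eq, true_and, swap_apply_left]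
  have hfix : ∀ j, q < j → swap p q j = j := fun _ => swap_apply_of_gt_of_gt hpq.lt
  constructor
  · rintro ⟨j, hpj, hlt, hbelow⟩
    rcases (hpq.ge_of_gt hpj).eq_or_lt with rfl | hqj
    · simp [ha p] at hlt
    · refine ⟨j, hqj, by simpa [hfix j hqj, ha _ j] using hlt, fun i hqi hij => ?_⟩
      simpa [hfix i hqi, ha _ i] using hbelow i (hpq.lt.trans hqi) hij
  · rintro ⟨i, hqi, hlt, hbelow⟩
    refine ⟨i, hpq.lt.trans hqi, by simpa [hfix i hqi, ha _ i] using hlt, fun j hpj hji => ?_⟩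
    rcases (hpq.ge_of_gt hpj).eq_or_lt with rfl | hqj
    · simpa using ha _ _
    · simpa [hfix j hqj, ha _ j] using hbelow j hqj hji

theorem lex_flatMap_upperRow_swap_iff (ha : ∀ i j, a i j = a j i) (hpq : p ⋖ q) :
    Lex (· < ·) ((finRange K).flatMap (upperRow fun i j => a (swap p q i) (swap p q j)))
      ((finRange K).flatMap (upperRow a)) ↔
      Lex (· < ·) (offColumn a p q q) (offColumn a p q p) := by
  rw [lex_flatMap_iff (pairwise_lt_finRange K) (by simp [upperRow]), offColumn, offColumn,
    lex_map_iff (pairwise_lt_filter_finRange _)]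
  simp only [mem_finRange, true_and, true_imp_iff, mem_filter, decide_eq_true_eq]
  constructor
  · rintro ⟨x, hlex, hbelow⟩
    rcases hpq.lt_or_eq_or_eq_or_gt x with hxp | rfl | rfl | hqx
    · exact ⟨x, ⟨hxp.ne, (hxp.trans hpq.lt).ne⟩, (lex_upperRow_swap_of_lt hxp hpq.lt).1 hlex,
        fun i _ hix => (upperRow_swap_eq_of_lt (hix.trans hxp) hpq.lt).1 (hbelow i hix)⟩
    · obtain ⟨i, hqi, hlt, hmid⟩ := (lex_upperRow_swap_left_iff ha hpq).1 hlex
      refine ⟨i, ⟨(hpq.lt.trans hqi).ne', hqi.ne'⟩, hlt, fun i' ⟨hi'p, hi'q⟩ hi'i => ?_⟩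
      rcases hpq.lt_or_eq_or_eq_or_gt i' with hi'p' | rfl | rfl | hqi'
      · exact (upperRow_swap_eq_of_lt hi'p' hpq.lt).1 (hbelow i' hi'p')
      · exact absurd rfl hi'p
      · exact absurd rfl hi'q
      · exact hmid i' hqi' hi'i
    · have hcol := (upperRow_swap_left_eq_iff ha hpq).1 (hbelow p hpq.lt)
      rw [upperRow_swap_right_eq ha hpq.lt hcol] at hlex
      exact absurd hlex (lex_irrefl lt_irrefl _)
    · rw [upperRow_swap_of_gt hpq.lt hqx] at hlex
      exact absurd hlex (lex_irrefl lt_irrefl _)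
  · rintro ⟨i, ⟨hip, hiq⟩, hlt, hbelow⟩
    have hrows_below : ∀ y, y < p → y < i →
        upperRow (fun i j => a (swap p q i) (swap p q j)) y = upperRow a y :=
      fun y hyp hyi => (upperRow_swap_eq_of_lt hyp hpq.lt).2
        (hbelow y ⟨hyp.ne, (hyp.trans hpq.lt).ne⟩ hyi)
    rcases hpq.lt_or_eq_or_eq_or_gt i with hip' | rfl | rfl | hqi
    · exact ⟨i, (lex_upperRow_swap_of_lt hip' hpq.lt).2 hlt,
        fun y hyi => hrows_below y (hyi.trans hip') hyi⟩
    · exact absurd rfl hip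
    · exact absurd rfl hiq
    · refine ⟨p, (lex_upperRow_swap_left_iff ha hpq).2 ⟨i, hqi, hlt, fun i' hqi' hi'i =>
        hbelow i' ⟨(hpq.lt.trans hqi').ne', hqi'.ne'⟩ hi'i⟩, fun y hyp => ?_⟩
      exact hrows_below y hyp (hyp.trans (hpq.lt.trans hqi))

end UpperTriangle

section SwapKey

open List Equiv

variable {K : ℕ}

def swapKey (M : DataMatrix K) (p q k : Fin K) : List ℕ :=
  M.1 k :: M.2.1 k :: M.2.2.1 k :: offColumn M.2.2.2 p q k

theorem vvec_eq_flatMap_upperRow (M : DataMatrix K) :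
    vvec M = ofFn M.1 ++ ofFn M.2.1 ++ ofFn M.2.2.1 ++ (finRange K).flatMap (upperRow M.2.2.2) :=
  rfl

theorem prec_permAct_swap_iff (M : DataMatrix K) (hsym : ∀ i j, M.2.2.2 i j = M.2.2.2 j i)
    {p q : Fin K} (hpq : p ⋖ q) :
    prec (permAct (swap p q) M) M ↔ Lex (· < ·) (swapKey M p q q) (swapKey M p q p) := by
  have hp := mem_finRange p
  rw [prec, vvec_eq_flatMap_upperRow, vvec_eq_flatMap_upperRow]
  simp only [permAct, ofFn_eq_map, append_assoc]
  rw [lex_append_iff_of_length_eq (by simp), lex_append_iff_of_length_eq (by simp),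
    lex_append_iff_of_length_eq (by simp),
    lex_map_swap_iff (pairwise_lt_finRange K) hp hpq.lt,
    lex_map_swap_iff (pairwise_lt_finRange K) hp hpq.lt,
    lex_map_swap_iff (pairwise_lt_finRange K) hp hpq.lt,
    map_swap_eq_map_iff hp, map_swap_eq_map_iff hp, map_swap_eq_map_iff hp,
    lex_flatMap_upperRow_swap_iff hsym hpq]
  simp only [swapKey, cons_lex_cons_iff]

theorem orderedData_iff_not_lex_swapKey (M : DataMatrix K) :
    OrderedData M ↔ ∀ (j : ℕ) (hj : j < K), 0 < j →
      ¬ Lex (· < ·) (swapKey M ⟨j - 1, by omega⟩ ⟨j, hj⟩ ⟨j, hj⟩)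
        (swapKey M ⟨j - 1, by omega⟩ ⟨j, hj⟩ ⟨j - 1, by omega⟩) := by
  unfold OrderedData
  refine forall₂_congr fun j hj => imp_congr_right fun _ => ?_
  generalize (⟨j - 1, _⟩ : Fin K) = p
  generalize (⟨j, hj⟩ : Fin K) = q
  rw [forall_comm]
  simp only [forall_eq, swapKey, cons_lex_cons_iff, offColumn, not_or, not_and,
    not_lex_map_iff (pairwise_lt_filter_finRange _), mem_filter, mem_finRange, true_and,
    decide_eq_true_eq, Fin.lt_def]
  grind

end SwapKey

/-- Characterization: a data matrix with symmetric `a`-part is ordered (has no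
breaking position) if and only if it is `≺`-minimal in the set consisting of
itself and its images under adjacent transpositions, i.e. no adjacent
transposition makes it strictly smaller. -/
theorem stmt9 (K : ℕ) (M : DataMatrix K)
    (hsym : ∀ i j, M.2.2.2 i j = M.2.2.2 j i) :
    OrderedData M ↔
      ∀ (j : ℕ) (hj : j < K), 0 < j →
        ¬ prec (permAct (Equiv.swap (⟨j - 1, by omega⟩ : Fin K) ⟨j, hj⟩) M) M := by
  rw [orderedData_iff_not_lex_swapKey]
  refine forall₂_congr fun j hj => imp_congr_right fun _ => ?_
  have hcov : (⟨j - 1, by omega⟩ : Fin K) ⋖ ⟨j, hj⟩ :=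
    Fin.covBy_iff.2 (Nat.covBy_iff_add_one_eq.2 (by simp only; omega))
  rw [prec_permAct_swap_iff M hsym hcov]
end

section
/- Fix K ≥ 1. For every data matrix G = (g, n, l, a) with a symmetric, there exists a permutation σ ∈ Σ_K such that σG is ordered (has no breaking position, in the sense of conditions (i)–(iv)). Consequently, the algorithm that generates only ordered matrices produces at least one representative of every Σ_K-orbit of data matrices. -/
/-!
If `G` is not ordered, swapping the indices `p < q` of a breaking position makes `v(G)`
lexicographically smaller: entries of `g`, `n`, `l` before `p` are untouched, and the first entry
that changes is the one where the breaking condition fails, which decreases. In `a`, the first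
changed entry is located through the first row `i₀ ∉ {p, q}` in which columns `p` and `q` differ;
when `i₀ > q` it lies in row `p`, and symmetry of `a` is what compares it with row `q`. Hence a
permutation minimising `v(σG)` over the finite group `Σ_K` makes `σG` ordered.

`v` is compared block by block (`g`, `n`, `l`, the rows of the upper triangle of `a`), which is
legitimate because the block lengths do not depend on `G`.
-/

open Finset

namespace List

variable {α ι : Type*}

theorem append_lt_append_of_lt_of_length_eq [LT α] {l₁ l₂ : List α} (h : l₁ < l₂)
    (hlen : l₁.length = l₂.length) (m₁ m₂ : List α) : l₁ ++ m₁ < l₂ ++ m₂ := by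
  induction h with
  | nil => simp at hlen
  | cons _ ih => exact Lex.cons (ih (by simpa using hlen))
  | rel h => exact Lex.rel h

theorem flatten_lt_flatten [LT α] {L₁ L₂ : List (List α)} (h : L₁ < L₂)
    (hlen : L₁.map length = L₂.map length) : L₁.flatten < L₂.flatten := by
  induction h with
  | nil => simp at hlen
  | cons _ ih =>
    rw [map_cons, map_cons, cons.injEq] at hlen
    exact append_left_lt (ih hlen.2)
  | rel h =>
    rw [map_cons, map_cons, cons.injEq] at hlen
    exact append_lt_append_of_lt_of_length_eq h hlen.1 _ _

theorem map_lt_map_of_pairwise [LinearOrder ι] [LT α] {L : List ι} (hL : L.Pairwise (· < ·))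
    {f g : ι → α} {j : ι} (hj : j ∈ L) (heq : ∀ i ∈ L, i < j → f i = g i) (hlt : f j < g j) :
    L.map f < L.map g := by
  induction L with
  | nil => simp at hj
  | cons i L ih =>
    rw [pairwise_cons] at hL
    rcases eq_or_ne i j with rfl | hij
    · exact Lex.rel hlt
    · have hj' : j ∈ L := (mem_cons.1 hj).resolve_left hij.symm
      rw [map_cons, map_cons, heq i mem_cons_self (hL.1 j hj')]
      exact Lex.cons (ih hL.2 hj' fun k hk => heq k (mem_cons_of_mem _ hk))

theorem map_comp_swap_lt [LinearOrder ι] [LT α] {L : List ι} (hL : L.Pairwise (· < ·))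
    {p q : ι} (hp : p ∈ L) (hpq : p < q) {f : ι → α} (h : f q < f p) :
    L.map (fun i => f (Equiv.swap p q i)) < L.map f :=
  map_lt_map_of_pairwise hL hp
    (fun _ _ hi => by rw [Equiv.swap_apply_of_ne_of_ne hi.ne (hi.trans hpq).ne])
    (by rwa [Equiv.swap_apply_left])

theorem ofFn_comp_swap_lt [LT α] {K : ℕ} {p q : Fin K} (hpq : p < q) {f : Fin K → α}
    (h : f q < f p) : ofFn (fun i => f (Equiv.swap p q i)) < ofFn f := by
  rw [ofFn_eq_map, ofFn_eq_map]
  exact map_comp_swap_lt (pairwise_lt_finRange K) (mem_finRange p) hpq h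

end List

theorem Equiv.comp_swap_eq_self {α β : Type*} [DecidableEq α] {f : α → β} {p q : α}
    (h : f p = f q) : (fun i => f (Equiv.swap p q i)) = f := by
  rw [← Function.comp_def, Equiv.comp_swap_eq_update, h, Function.update_eq_self, ← h,
    Function.update_eq_self]

namespace DataMatrix

open Equiv

variable {K : ℕ}

def upperRow (A : Fin K → Fin K → ℕ) (i : Fin K) : List ℕ :=
  ((List.finRange K).filter (fun j => i < j)).map (A i)

def blocks (M : DataMatrix K) : List (List ℕ) :=
  List.ofFn M.1 :: List.ofFn M.2.1 :: List.ofFn M.2.2.1 ::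
    (List.finRange K).map (upperRow M.2.2.2)

theorem vvec_eq_flatten_blocks (M : DataMatrix K) : vvec M = (blocks M).flatten := by
  simp only [vvec, blocks, List.flatMap, List.flatten_cons, List.append_assoc]
  rfl

theorem prec_of_blocks_lt {M N : DataMatrix K} (h : blocks M < blocks N) : prec M N := by
  rw [prec, vvec_eq_flatten_blocks, vvec_eq_flatten_blocks]
  exact List.flatten_lt_flatten h (by simp [blocks, upperRow, Function.comp_def])

theorem permAct_permAct (σ τ : Perm (Fin K)) (M : DataMatrix K) :
    permAct τ (permAct σ M) = permAct (σ * τ) M :=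
  rfl

theorem upperRow_swap_of_eq {A : Fin K → Fin K → ℕ} {p q x : Fin K} (hxp : x ≠ p) (hxq : x ≠ q)
    (h : A x p = A x q) : upperRow (fun i j => A (swap p q i) (swap p q j)) x = upperRow A x := by
  rw [upperRow, upperRow, swap_apply_of_ne_of_ne hxp hxq, Equiv.comp_swap_eq_self h]

section Rows

variable {A : Fin K → Fin K → ℕ} {p q : Fin K}

local notation "Aτ" => fun i j => A (swap p q i) (swap p q j)

theorem upperRows_swap_lt_of_lt (hpq : p < q) {i₀ : Fin K} (hi₀ : i₀ < p)
    (hmin : ∀ x < i₀, A x p = A x q) (hlt : A i₀ q < A i₀ p) :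
    (List.finRange K).map (upperRow Aτ) < (List.finRange K).map (upperRow A) := by
  refine List.map_lt_map_of_pairwise (List.pairwise_lt_finRange K) (List.mem_finRange i₀)
    (fun x _ hx => upperRow_swap_of_eq (hx.trans hi₀).ne (hx.trans (hi₀.trans hpq)).ne
      (hmin x hx)) ?_
  rw [upperRow, upperRow, swap_apply_of_ne_of_ne hi₀.ne (hi₀.trans hpq).ne]
  exact List.map_comp_swap_lt ((List.pairwise_lt_finRange K).filter _)
    (by simpa using hi₀) hpq hlt

theorem upperRows_swap_lt_of_gt (hA : ∀ i j, A i j = A j i) (hpq : p < q) {i₀ : Fin K}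
    (hi₀ : p < i₀) (hi₀q : i₀ ≠ q) (hmin : ∀ x < i₀, x ≠ p → x ≠ q → A x p = A x q)
    (hlt : A i₀ q < A i₀ p) :
    (List.finRange K).map (upperRow Aτ) < (List.finRange K).map (upperRow A) := by
  refine List.map_lt_map_of_pairwise (List.pairwise_lt_finRange K) (List.mem_finRange p)
    (fun x _ hx => upperRow_swap_of_eq hx.ne (hx.trans hpq).ne
      (hmin x (hx.trans hi₀) hx.ne (hx.trans hpq).ne)) ?_
  rw [upperRow, upperRow, swap_apply_left]
  refine List.map_lt_map_of_pairwise ((List.pairwise_lt_finRange K).filter _)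
    (by simpa using hi₀) (fun y hy hyi₀ => ?_) ?_
  · have hpy : p < y := by simpa using hy
    rcases eq_or_ne y q with rfl | hyq
    · rw [swap_apply_right, hA]
    · rw [swap_apply_of_ne_of_ne hpy.ne' hyq, hA, ← hmin y hyi₀ hpy.ne' hyq, hA]
  · rw [swap_apply_of_ne_of_ne hi₀.ne' hi₀q, hA, hA p]
    exact hlt

/- With `i₀` the first row outside `{p, q}` in which columns `p` and `q` differ, the first entry
of the upper triangle moved by the swap is `(i₀, p)` if `i₀ < p`, and `(p, i₀)` otherwise. -/
theorem upperRows_swap_lt (hA : ∀ i j, A i j = A j i) (hpq : p < q) {i : Fin K} (hip : i ≠ p)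
    (hiq : i ≠ q) (hi : A i q < A i p)
    (hbefore : ∀ i' < i, i' ≠ p → i' ≠ q → A i' q ≤ A i' p) :
    (List.finRange K).map (upperRow Aτ) < (List.finRange K).map (upperRow A) := by
  obtain ⟨i₀, ⟨hi₀p, hi₀q, hlt⟩, hfirst⟩ := wellFounded_lt.has_min
    {x | x ≠ p ∧ x ≠ q ∧ A x q < A x p} ⟨i, hip, hiq, hi⟩
  have hi₀i : i₀ ≤ i := not_lt.1 (hfirst i ⟨hip, hiq, hi⟩)
  have hmin : ∀ x < i₀, x ≠ p → x ≠ q → A x p = A x q := fun x hx hxp hxq =>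
    le_antisymm (not_lt.1 fun h => hfirst x ⟨hxp, hxq, h⟩ hx)
      (hbefore x (hx.trans_le hi₀i) hxp hxq)
  rcases hi₀p.lt_or_gt with h | h
  · exact upperRows_swap_lt_of_lt hpq h
      (fun x hx => hmin x hx (hx.trans h).ne (hx.trans (h.trans hpq)).ne) hlt
  · exact upperRows_swap_lt_of_gt hA hpq h hi₀q hmin hlt

end Rows

section Swap

variable {N : DataMatrix K} {p q : Fin K}

theorem prec_swap_of_g_lt (hpq : p < q) (h : N.1 q < N.1 p) :
    prec (permAct (swap p q) N) N :=
  prec_of_blocks_lt (List.Lex.rel (List.ofFn_comp_swap_lt hpq h))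

theorem prec_swap_of_n_lt (hpq : p < q) (hg : N.1 p = N.1 q) (h : N.2.1 q < N.2.1 p) :
    prec (permAct (swap p q) N) N := by
  apply prec_of_blocks_lt
  simp only [blocks, permAct, Equiv.comp_swap_eq_self hg]
  exact List.Lex.cons (List.Lex.rel (List.ofFn_comp_swap_lt hpq h))

theorem prec_swap_of_l_lt (hpq : p < q) (hg : N.1 p = N.1 q) (hn : N.2.1 p = N.2.1 q)
    (h : N.2.2.1 q < N.2.2.1 p) : prec (permAct (swap p q) N) N := by
  apply prec_of_blocks_lt
  simp only [blocks, permAct, Equiv.comp_swap_eq_self hg, Equiv.comp_swap_eq_self hn]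
  exact List.Lex.cons (List.Lex.cons (List.Lex.rel (List.ofFn_comp_swap_lt hpq h)))

theorem prec_swap_of_a_lt (hsym : ∀ i j, N.2.2.2 i j = N.2.2.2 j i) (hpq : p < q)
    (hg : N.1 p = N.1 q) (hn : N.2.1 p = N.2.1 q) (hl : N.2.2.1 p = N.2.2.1 q) {i : Fin K}
    (hip : i ≠ p) (hiq : i ≠ q) (hi : N.2.2.2 i q < N.2.2.2 i p)
    (hbefore : ∀ i' < i, i' ≠ p → i' ≠ q → N.2.2.2 i' q ≤ N.2.2.2 i' p) :
    prec (permAct (swap p q) N) N := by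
  apply prec_of_blocks_lt
  simp only [blocks, permAct, Equiv.comp_swap_eq_self hg, Equiv.comp_swap_eq_self hn,
    Equiv.comp_swap_eq_self hl]
  exact List.Lex.cons (List.Lex.cons (List.Lex.cons
    (upperRows_swap_lt hsym hpq hip hiq hi hbefore)))

end Swap

theorem exists_prec_permAct_of_not_orderedData {N : DataMatrix K}
    (hsym : ∀ i j, N.2.2.2 i j = N.2.2.2 j i) (h : ¬ OrderedData N) :
    ∃ τ : Perm (Fin K), prec (permAct τ N) N := by
  unfold OrderedData at h
  push Not at h
  obtain ⟨j, hj, hj0, p, q, hp, hq, hbreak⟩ := h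
  have hpq : p < q := by rw [hp, hq, Fin.mk_lt_mk]; omega
  refine ⟨swap p q, ?_⟩
  by_cases h1 : N.1 p ≤ N.1 q
  swap
  · exact prec_swap_of_g_lt hpq (not_le.1 h1)
  by_cases h2 : N.2.1 q < N.2.1 p → N.1 p < N.1 q
  swap
  · push Not at h2
    exact prec_swap_of_n_lt hpq (h1.antisymm h2.2) h2.1
  by_cases h3 : N.2.2.1 q < N.2.2.1 p → N.1 p < N.1 q ∨ N.2.1 p < N.2.1 q
  swap
  · push Not at h3
    obtain ⟨hl, hg, hn⟩ := h3
    exact prec_swap_of_l_lt hpq (h1.antisymm hg)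
      ((not_lt.1 fun h => (h2 h).not_ge hg).antisymm hn) hl
  obtain ⟨i, hip, hiq, hi, hg, hn, hl, hbefore⟩ := hbreak h1 h2 h3
  have hn' : N.2.1 p ≤ N.2.1 q := not_lt.1 fun h => (h2 h).not_ge hg
  have hl' : N.2.2.1 p ≤ N.2.2.1 q := not_lt.1 fun h =>
    (h3 h).elim (fun h => h.not_ge hg) (fun h => h.not_ge hn)
  exact prec_swap_of_a_lt hsym hpq (h1.antisymm hg) (hn'.antisymm hn) (hl'.antisymm hl)
    hip hiq hi hbefore

end DataMatrix

theorem stmt10_general (K : ℕ) (M : DataMatrix K)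
    (hsym : ∀ i j, M.2.2.2 i j = M.2.2.2 j i) :
    ∃ σ : Equiv.Perm (Fin K), OrderedData (permAct σ M) := by
  obtain ⟨σ, -, hσ⟩ := Finset.univ.exists_min_image (fun σ => vvec (permAct σ M))
    ⟨1, Finset.mem_univ 1⟩
  refine ⟨σ, ?_⟩
  by_contra hσM
  obtain ⟨τ, hτ⟩ :=
    DataMatrix.exists_prec_permAct_of_not_orderedData (fun i j => hsym (σ i) (σ j)) hσM
  rw [DataMatrix.permAct_permAct] at hτ
  exact (hσ (σ * τ) (Finset.mem_univ _)).not_gt hτ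

/-- Every data matrix with symmetric `a`-part can be brought to an ordered one
by a permutation; hence generating only ordered matrices produces at least one
representative of every `Σ_K`-orbit. -/
theorem stmt10 (K : ℕ) (hK : 1 ≤ K) (M : DataMatrix K)
    (hsym : ∀ i j, M.2.2.2 i j = M.2.2.2 j i) :
    ∃ σ : Equiv.Perm (Fin K), OrderedData (permAct σ M) :=
  stmt10_general K M hsym
end
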